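/- arXiv:1403.1361 — 5 statements merged into one kernel-verified Lean document; each statement's English description precedes it below -/
import Mathlib

section
/- Consider the scheme ρᵢⁿ⁺¹ = ρᵢⁿ(1 - λc + (λ/4)(a_{i-1/2}ⁿ - a_{i+1/2}ⁿ)) + (λ/2)(c + a_{i-1/2}ⁿ/2)ρ_{i-1}ⁿ + (λ/2)(c - a_{i+1/2}ⁿ/2)ρ_{i+1}ⁿ. If |a_{i±1/2}ⁿ| ≤ c for all i, λc ≤ 2/3, and ρᵢⁿ ≥ 0 for all i, then ρᵢⁿ⁺¹ ≥ 0 for all i. -/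
theorem stmt_1 (lam c : ℝ) (hlam : 0 < lam) (hc : 0 < c)
    (ρ a : ℤ → ℝ)
    (ha : ∀ i, |a i| ≤ c)
    (hcfl : lam * c ≤ 2 / 3)
    (hρ : ∀ i, 0 ≤ ρ i) :
    ∀ i : ℤ, 0 ≤ ρ i * (1 - lam * c + lam / 4 * (a (i - 1) - a i))
      + lam / 2 * (c + a (i - 1) / 2) * ρ (i - 1)
      + lam / 2 * (c - a i / 2) * ρ (i + 1) := by
  intro i
  have h1 := abs_le.mp (ha (i - 1))
  have h2 := abs_le.mp (ha i)
  have t1 : 0 ≤ ρ i * (1 - lam * c + lam / 4 * (a (i - 1) - a i)) := by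
    apply mul_nonneg (hρ i)
    nlinarith [h1.1, h2.2]
  have t2 : 0 ≤ lam / 2 * (c + a (i - 1) / 2) * ρ (i - 1) := by
    apply mul_nonneg (mul_nonneg (by linarith) (by linarith [h1.1])) (hρ _)
  have t3 : 0 ≤ lam / 2 * (c - a i / 2) * ρ (i + 1) := by
    apply mul_nonneg (mul_nonneg (by linarith) (by linarith [h2.2])) (hρ _)
  linarith
end

section
/- Consider the scheme Mᵢⁿ⁺¹ = (1 - λc)Mᵢⁿ + (λ/2)(c - a_{i+1/2}ⁿ/2)M_{i-1}ⁿ + (λ/2)(c + a_{i+1/2}ⁿ/2)M_{i+1}ⁿ. If λc ≤ 1, |a_{i+1/2}ⁿ| ≤ c for all i, and 0 ≤ Mᵢⁿ ≤ M for all i, then 0 ≤ Mᵢⁿ⁺¹ ≤ M for all i (the update is a convex combination of M_{i-1}ⁿ, Mᵢⁿ, M_{i+1}ⁿ). -/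
theorem stmt_2 (lam c M : ℝ) (hlam : 0 < lam) (hc : 0 < c) (hM : 0 < M)
    (Mn : ℤ → ℝ) (a : ℤ → ℝ)
    (hcfl : lam * c ≤ 1)
    (ha : ∀ i, |a i| ≤ c)
    (hMn : ∀ i, 0 ≤ Mn i ∧ Mn i ≤ M) :
    ∀ i : ℤ,
      0 ≤ (1 - lam * c) * Mn i + lam / 2 * (c - a i / 2) * Mn (i - 1)
          + lam / 2 * (c + a i / 2) * Mn (i + 1) ∧
      (1 - lam * c) * Mn i + lam / 2 * (c - a i / 2) * Mn (i - 1)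
          + lam / 2 * (c + a i / 2) * Mn (i + 1) ≤ M := by
  intro i
  have hai := abs_le.mp (ha i)
  obtain ⟨h0, h1⟩ := hMn i
  obtain ⟨h2, h3⟩ := hMn (i - 1)
  obtain ⟨h4, h5⟩ := hMn (i + 1)
  constructor
  · have c1 : 0 ≤ 1 - lam * c := by linarith
    have c2 : 0 ≤ lam / 2 * (c - a i / 2) := by nlinarith
    have c3 : 0 ≤ lam / 2 * (c + a i / 2) := by nlinarith
    positivity
  · nlinarith [mul_nonneg (mul_nonneg hlam.le hc.le) (sub_nonneg.mpr h1),
      mul_nonneg hlam.le (mul_nonneg (by nlinarith : (0:ℝ) ≤ c - a i / 2) (sub_nonneg.mpr h3)),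
      mul_nonneg hlam.le (mul_nonneg (by nlinarith : (0:ℝ) ≤ c + a i / 2) (sub_nonneg.mpr h5))]
end

section
/- Let the discrete values satisfy the relations ∂ₓS_{i+1}ⁿ - ∂ₓSᵢⁿ = δx((ν_{i+1}ⁿ + νᵢⁿ)/2 - (ρ_{i+1}ⁿ + ρᵢⁿ)/2) with ∂ₓS₀ⁿ = 0, M₀ⁿ = 0, Mᵢⁿ = δx Σ_{j≤i} ρⱼⁿ. Then ∂ₓS_{i+1}ⁿ = -(1/2)(M_{i+1}ⁿ + Mᵢⁿ - δx(2Σ_{j=0}^i νⱼⁿ + ν_{i+1}ⁿ - ν₀ⁿ)). Consequently, if 0 ≤ Mᵢⁿ ≤ M and δx Σⱼ|νⱼⁿ| ≤ M w₀, then |∂ₓS_{i+1}ⁿ| ≤ M(1 + w₀). -/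
/-!
Summing the relation telescopically expresses `∂ₓSᵢ₊₁` through trapezoidal sums of `ν` and `ρ`;
the trapezoidal sum of `ρ` is `(Mᵢ₊₁ + Mᵢ)/δx` because `δx ρ₀ = M₀ = 0`. The bound then follows from
the triangle inequality, since the trapezoidal sum of `|ν|` up to `i + 1` is dominated by
`∑_{j<i+1} |νⱼ| + ∑_{j<i+2} |νⱼ|`.
-/

open Finset

theorem sum_range_succ_add_self {M : Type*} [AddCommGroup M] (f : ℕ → M) (n : ℕ) :
    ∑ k ∈ range n, (f (k + 1) + f k) = ∑ k ∈ range (n + 1), f k + ∑ k ∈ range n, f k - f 0 := by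
  rw [sum_add_distrib, sum_range_succ']
  abel

theorem abs_sum_range_succ_add_self_le (f : ℕ → ℝ) (n : ℕ) :
    |∑ k ∈ range n, (f (k + 1) + f k)| ≤ ∑ k ∈ range (n + 1), |f k| + ∑ k ∈ range n, |f k| :=
  calc |∑ k ∈ range n, (f (k + 1) + f k)|
      ≤ ∑ k ∈ range n, (|f (k + 1)| + |f k|) :=
        (abs_sum_le_sum_abs _ _).trans (sum_le_sum fun _ _ => abs_add_le _ _)
    _ = ∑ k ∈ range (n + 1), |f k| + ∑ k ∈ range n, |f k| - |f 0| :=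
        sum_range_succ_add_self (fun k => |f k|) n
    _ ≤ ∑ k ∈ range (n + 1), |f k| + ∑ k ∈ range n, |f k| := sub_le_self _ (abs_nonneg _)

theorem discrete_gradient_eq {δx : ℝ} {dS ν ρ Mm : ℕ → ℝ}
    (hrel : ∀ i : ℕ, dS (i + 1) - dS i =
      δx * ((ν (i + 1) + ν i) / 2 - (ρ (i + 1) + ρ i) / 2))
    (hdS0 : dS 0 = 0)
    (hMm : ∀ i : ℕ, Mm i = δx * ∑ j ∈ range (i + 1), ρ j)
    (hM0 : Mm 0 = 0) (i : ℕ) :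
    dS (i + 1) = -(1 / 2) * (Mm (i + 1) + Mm i - δx * ∑ k ∈ range (i + 1), (ν (k + 1) + ν k)) := by
  have htelescope : dS (i + 1) = δx * (∑ k ∈ range (i + 1), (ν (k + 1) + ν k) / 2
      - ∑ k ∈ range (i + 1), (ρ (k + 1) + ρ k) / 2) := by
    rw [← sum_sub_distrib, mul_sum, ← sum_congr rfl fun k _ => hrel k, sum_range_sub, hdS0,
      sub_zero]
  have hρ0 : δx * ρ 0 = 0 := by simpa [hM0] using (hMm 0).symm
  rw [htelescope, ← sum_div, ← sum_div, sum_range_succ_add_self ρ, hMm, hMm]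
  linear_combination hρ0 / 2

theorem stmt_6 (δx M w₀ : ℝ) (hδx : 0 < δx)
    (dS ν ρ Mm : ℕ → ℝ)
    (hrel : ∀ i : ℕ, dS (i + 1) - dS i =
      δx * ((ν (i + 1) + ν i) / 2 - (ρ (i + 1) + ρ i) / 2))
    (hdS0 : dS 0 = 0)
    (hMm : ∀ i : ℕ, Mm i = δx * ∑ j ∈ Finset.range (i + 1), ρ j)
    (hM0 : Mm 0 = 0) :
    (∀ i : ℕ, dS (i + 1) =
      -(1 / 2) * (Mm (i + 1) + Mm i
        - δx * (2 * ∑ j ∈ Finset.range (i + 1), ν j + ν (i + 1) - ν 0))) ∧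
    ((∀ i, 0 ≤ Mm i ∧ Mm i ≤ M) →
      (∀ i : ℕ, δx * ∑ j ∈ Finset.range i, |ν j| ≤ M * w₀) →
      ∀ i : ℕ, |dS (i + 1)| ≤ M * (1 + w₀)) := by
  have hdS := discrete_gradient_eq hrel hdS0 hMm hM0
  refine ⟨fun i => by rw [hdS, sum_range_succ_add_self, sum_range_succ]; ring, ?_⟩
  intro hMb hνb i
  have hν : δx * |∑ k ∈ range (i + 1), (ν (k + 1) + ν k)| ≤ 2 * (M * w₀) := by
    have := mul_le_mul_of_nonneg_left (abs_sum_range_succ_add_self_le ν (i + 1)) hδx.le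
    linarith [hνb (i + 2), hνb (i + 1)]
  calc |dS (i + 1)|
      = 1 / 2 * |Mm (i + 1) + Mm i - δx * ∑ k ∈ range (i + 1), (ν (k + 1) + ν k)| := by
        rw [hdS, abs_mul, abs_neg, abs_of_pos one_half_pos]
    _ ≤ 1 / 2 * (Mm (i + 1) + Mm i + δx * |∑ k ∈ range (i + 1), (ν (k + 1) + ν k)|) := by
        gcongr
        refine (abs_sub _ _).trans_eq ?_
        rw [abs_mul, abs_of_pos hδx, abs_of_nonneg (add_nonneg (hMb _).1 (hMb _).1)]
    _ ≤ M * (1 + w₀) := by linarith [(hMb (i + 1)).2, (hMb i).2]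
end

section
/- Suppose a : ℝ → ℝ is increasing and odd, A its antiderivative (so A is even and strictly convex). Let ρ = Σᵢ mᵢ δ_{xᵢ} with mᵢ > 0 and S = W*ρ with W(x) = (1/2)e^{-|x|}, so ∂ₓS has jump -mᵢ at xᵢ. If for every i the jump relation [A(∂ₓS)]_{xᵢ} = 0 holds, i.e. A((mᵢ + cᵢ)/2) = A((-mᵢ + cᵢ)/2) with cᵢ = Σ_{j≠i} mⱼ e^{-|xⱼ - xᵢ|}, then cᵢ = 0 for all i; in particular, if n ≥ 2 with distinct points, no stationary configuration exists, so stationary states consist of a single Dirac mass. -/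
/-!
An antiderivative `A` of an odd, strictly increasing `a` is even and strictly increasing on
`[0, ∞)`, so `A u = A w` forces `|u| = |w|`. For `u = (mᵢ + cᵢ)/2` and `w = (-mᵢ + cᵢ)/2` this
means `u = -w` (as `mᵢ > 0` rules out `u = w`), i.e. `cᵢ = 0`. With a second mass `cᵢ` is a sum
of positive terms, a contradiction.
-/

open Set

theorem Function.Even.of_hasDerivAt {a A : ℝ → ℝ} (hA : ∀ x, HasDerivAt A (a x) x)
    (hodd : a.Odd) : A.Even := by
  have hsym : ∀ y, HasDerivAt (fun t => A (-t) - A t) 0 y := fun y => by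
    have h := ((hA (-y)).comp y (hasDerivAt_id y).neg).sub (hA y)
    rwa [hodd y, mul_neg_one, neg_neg, sub_self] at h
  intro y
  have := is_const_of_deriv_eq_zero (fun y => (hsym y).differentiableAt)
    (fun y => (hsym y).deriv) y 0
  simpa [sub_eq_zero] using this

theorem strictMonoOn_Ici_of_hasDerivAt_pos {a A : ℝ → ℝ} (hA : ∀ x, HasDerivAt A (a x) x)
    (ha : ∀ x, 0 < x → 0 < a x) : StrictMonoOn A (Ici 0) := by
  refine strictMonoOn_of_deriv_pos (convex_Ici 0)
    (HasDerivAt.continuousOn fun x _ => hA x) fun x hx => ?_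
  rw [interior_Ici] at hx
  rw [(hA x).deriv]
  exact ha x hx

theorem Function.Even.abs_eq_abs_of_apply_eq {A : ℝ → ℝ} (heven : A.Even)
    (hmono : StrictMonoOn A (Ici 0)) {u w : ℝ} (h : A u = A w) : |u| = |w| := by
  have habs : ∀ y, A |y| = A y := fun y => by
    rcases abs_choice y with hy | hy <;> rw [hy]; exact heven y
  exact hmono.injOn (abs_nonneg u) (abs_nonneg w) (by rw [habs, habs, h])

theorem sum_erase_mul_exp_pos {n : ℕ} (x m : Fin n → ℝ) (hm : ∀ i, 0 < m i) {i j : Fin n}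
    (hji : j ≠ i) : 0 < ∑ k ∈ Finset.univ.erase i, m k * Real.exp (-|x k - x i|) :=
  Finset.sum_pos' (fun k _ => (mul_pos (hm k) (Real.exp_pos _)).le)
    ⟨j, Finset.mem_erase.2 ⟨hji, Finset.mem_univ j⟩, mul_pos (hm j) (Real.exp_pos _)⟩

theorem stmt_16_general (a A : ℝ → ℝ)
    (ha : StrictMono a)
    (hodd : ∀ x, a (-x) = -a x)
    (hA : ∀ x, HasDerivAt A (a x) x)
    (n : ℕ) (x : Fin n → ℝ)
    (m : Fin n → ℝ) (hm : ∀ i, 0 < m i)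
    (c : Fin n → ℝ)
    (hc : ∀ i, c i = ∑ j ∈ Finset.univ.erase i, m j * Real.exp (-|x j - x i|))
    (hstat : ∀ i, A ((m i + c i) / 2) = A ((-m i + c i) / 2)) :
    (∀ i, c i = 0) ∧ (2 ≤ n → False) := by
  have heven : A.Even := .of_hasDerivAt hA hodd
  have hmono := strictMonoOn_Ici_of_hasDerivAt_pos hA fun x hx =>
    Function.Odd.map_zero hodd ▸ ha hx
  have hc0 : ∀ i, c i = 0 := fun i => by
    rcases abs_eq_abs.1 (heven.abs_eq_abs_of_apply_eq hmono (hstat i)) with h | h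
    · linarith [hm i]
    · linarith
  refine ⟨hc0, fun hn => ?_⟩
  have hpos := sum_erase_mul_exp_pos x m hm
    (show (⟨1, by omega⟩ : Fin n) ≠ ⟨0, by omega⟩ by simp [Fin.ext_iff])
  rw [← hc, hc0] at hpos
  exact lt_irrefl 0 hpos

theorem stmt_16 (a A : ℝ → ℝ)
    (ha : StrictMono a)
    (hodd : ∀ x, a (-x) = -a x)
    (hA : ∀ x, HasDerivAt A (a x) x)
    (n : ℕ) (x : Fin n → ℝ) (hx : Function.Injective x)
    (m : Fin n → ℝ) (hm : ∀ i, 0 < m i)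
    (c : Fin n → ℝ)
    (hc : ∀ i, c i = ∑ j ∈ Finset.univ.erase i, m j * Real.exp (-|x j - x i|))
    (hstat : ∀ i, A ((m i + c i) / 2) = A ((-m i + c i) / 2)) :
    (∀ i, c i = 0) ∧ (2 ≤ n → False) :=
  stmt_16_general a A ha hodd hA n x m hm c hc hstat
end

section
/- In the Lax–Friedrichs scheme for Burgers derived from the aggregation scheme, ∂ₓSᵢⁿ⁺¹ = ∂ₓSᵢⁿ(1 - λc) + (λc/2)(∂ₓS_{i-1}ⁿ + ∂ₓS_{i+1}ⁿ) - (λ/4)(A(∂ₓS_{i+1}ⁿ) - A(∂ₓS_{i-1}ⁿ)): if the aggregation scheme relations ρ_{i+1/2}ⁿ = -(∂ₓS_{i+1}ⁿ - ∂ₓSᵢⁿ)/δx, J_{i+1/2}ⁿ = -(A(∂ₓS_{i+1}ⁿ) - A(∂ₓSᵢⁿ))/δx, ρ_{i+1/2}ⁿ⁺¹ = ρ_{i+1/2}ⁿ(1-λc) + (λc/2)(ρ_{i-1/2}ⁿ + ρ_{i+3/2}ⁿ) + (λ/4)(J_{i-1/2}ⁿ - J_{i+3/2}ⁿ) hold,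 with boundary condition ∂ₓS₀ⁿ = 0 for all n, then summing over cells yields the displayed Burgers scheme update. -/
/-!
Write `u = ∂ₓS` and let `LF u` be the Lax–Friedrichs update of `u`. Taking forward differences of
`LF u` reproduces, term by term, the aggregation update applied to the differences of `u` and of
`A ∘ u`; since `ρ` and `J` are (up to the factor `-1/δx`) exactly these differences, the aggregation
update says that `∂ₓSⁿ⁺¹` and `LF (∂ₓSⁿ)` have the same forward differences. Both vanish at the
cell `0`: `∂ₓSⁿ⁺¹₀ = 0` by the boundary condition, and `LF (∂ₓSⁿ)₀ = 0` because `ρ` vanishing on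
the cells `k ≤ 0` makes `∂ₓSⁿ` vanish at `-1, 0, 1`. Hence they agree everywhere.
-/

open fwdDiff

lemma eq_of_fwdDiff_one_eq {G : Type*} [AddCommGroup G] {f g : ℤ → G}
    (hΔ : Δ_[1] f = Δ_[1] g) (h₀ : f 0 = g 0) : f = g := by
  have hstep : ∀ i, f (i + 1) - g (i + 1) = f i - g i := fun i => by
    have := congrFun hΔ i
    simp only [fwdDiff] at this
    rwa [sub_eq_sub_iff_sub_eq_sub]
  funext i
  rw [← sub_eq_zero]
  induction i using Int.induction_on with
  | zero => exact sub_eq_zero.mpr h₀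
  | succ i ih => rw [hstep, ih]
  | pred i ih => rw [← hstep, sub_add_cancel, ih]

section Schemes

variable {K : Type*} [Field K]

def laxFriedrichsStep (A : K → K) (lam c : K) (u : ℤ → K) (i : ℤ) : K :=
  u i * (1 - lam * c) + lam * c / 2 * (u (i - 1) + u (i + 1))
    - lam / 4 * (A (u (i + 1)) - A (u (i - 1)))

def aggregationStep (lam c : K) (ρ J : ℤ → K) (i : ℤ) : K :=
  ρ i * (1 - lam * c) + lam * c / 2 * (ρ (i - 1) + ρ (i + 1)) + lam / 4 * (J (i - 1) - J (i + 1))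

lemma aggregationStep_smul (lam c a : K) (ρ J : ℤ → K) :
    aggregationStep lam c (a • ρ) (a • J) = a • aggregationStep lam c ρ J := by
  funext i
  simp only [aggregationStep, Pi.smul_apply, smul_eq_mul]
  ring

lemma aggregationStep_fwdDiff (A : K → K) (lam c : K) (u : ℤ → K) :
    aggregationStep lam c (Δ_[1] u) (Δ_[1] (A ∘ u)) = Δ_[1] (laxFriedrichsStep A lam c u) := by
  funext i
  simp only [aggregationStep, laxFriedrichsStep, fwdDiff, Function.comp_apply,
    sub_add_cancel, add_sub_cancel_right, add_assoc, one_add_one_eq_two]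
  ring

lemma laxFriedrichsStep_eq_zero (A : K → K) (lam c : K) {u : ℤ → K} {i : ℤ}
    (hprev : u (i - 1) = 0) (hi : u i = 0) (hnext : u (i + 1) = 0) :
    laxFriedrichsStep A lam c u i = 0 := by
  simp [laxFriedrichsStep, hprev, hi, hnext]

end Schemes

theorem stmt_18 (A : ℝ → ℝ) (lam c δx : ℝ) (hδx : 0 < δx)
    (dS dS' ρh ρh' Jh : ℤ → ℝ)
    (hρ : ∀ i : ℤ, ρh i = -(dS (i + 1) - dS i) / δx)
    (hρ' : ∀ i : ℤ, ρh' i = -(dS' (i + 1) - dS' i) / δx)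
    (hJ : ∀ i : ℤ, Jh i = -(A (dS (i + 1)) - A (dS i)) / δx)
    (hupd : ∀ i : ℤ, ρh' i = ρh i * (1 - lam * c)
      + lam * c / 2 * (ρh (i - 1) + ρh (i + 1))
      + lam / 4 * (Jh (i - 1) - Jh (i + 1)))
    (hsupp : ∀ k : ℤ, k ≤ 0 → ρh k = 0)
    (hdS0 : dS 0 = 0) (hdS'0 : dS' 0 = 0) :
    ∀ i : ℤ, 1 ≤ i →
      dS' i = dS i * (1 - lam * c) + lam * c / 2 * (dS (i - 1) + dS (i + 1))
        - lam / 4 * (A (dS (i + 1)) - A (dS (i - 1))) := by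
  have hscale : ∀ u : ℤ → ℝ, (fun i => -(u (i + 1) - u i) / δx) = (-δx⁻¹) • Δ_[1] u :=
    fun u => funext fun i => by simp only [fwdDiff, Pi.smul_apply, smul_eq_mul]; ring
  have hρh : ρh = (-δx⁻¹) • Δ_[1] dS := (funext hρ).trans (hscale dS)
  have hρh' : ρh' = (-δx⁻¹) • Δ_[1] dS' := (funext hρ').trans (hscale dS')
  have hJh : Jh = (-δx⁻¹) • Δ_[1] (A ∘ dS) := (funext hJ).trans (hscale (A ∘ dS))
  have hΔ : Δ_[1] dS' = Δ_[1] (laxFriedrichsStep A lam c dS) := by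
    refine smul_right_injective _ (neg_ne_zero.mpr (inv_ne_zero hδx.ne')) ?_
    calc (-δx⁻¹) • Δ_[1] dS' = aggregationStep lam c ρh Jh := hρh'.symm.trans (funext hupd)
      _ = (-δx⁻¹) • Δ_[1] (laxFriedrichsStep A lam c dS) := by
        rw [hρh, hJh, aggregationStep_smul, aggregationStep_fwdDiff]
  have hflat : ∀ k ≤ 0, dS (k + 1) = dS k := fun k hk => by
    have := hsupp k hk
    rw [hρ, div_eq_zero_iff, neg_eq_zero, sub_eq_zero] at this
    exact this.resolve_right hδx.ne'
  have hLF0 : laxFriedrichsStep A lam c dS 0 = 0 :=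
    laxFriedrichsStep_eq_zero A lam c (by simpa [hdS0] using (hflat (-1) (by norm_num)).symm)
      hdS0 (by simpa [hdS0] using hflat 0 le_rfl)
  intro i _
  exact congrFun (eq_of_fwdDiff_one_eq hΔ (hdS'0.trans hLF0.symm)) i
end
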